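/- Let P_s be an n_s-by-n binary matrix with column span C_s. Then the probability that two independent uniformly random codewords c₁, c₂ ∈ C_s are orthogonal over F_2 equals (1/2)(1 + 2^{−rank(P_sᵀ·P_s)}), where rank is taken over F_2. -/

import Mathlib

/-!
The map `d ↦ P d` is `|ker P|`-to-one onto the code `C`, so a uniform pair of codewords is the
image of a uniform pair `(d, e)` of message vectors, and `P d ⬝ P e = dᵀ (PᵀP) e`. For fixed `d`
this is a linear equation in `e`: it holds for every `e` when `(PᵀP) d = 0`, which happens for a
fraction `2^(-r)` of the `d`'s with `r = rank (PᵀP)`, and for exactly half of the `e`'s otherwise.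
Hence the probability is `2^(-r) + (1 - 2^(-r)) / 2`; over a field with `q` elements the same
count gives `q^(-r) + (1 - q^(-r)) / q`.
-/

open Finset Matrix Module

namespace AddMonoidHom

variable {G H : Type*} [AddGroup G] [Fintype G] [AddGroup H] [DecidableEq H]

theorem card_filter_comp_eq_mul_card_ker (f : G →+ H) (p : H → Prop) [DecidablePred p] :
    #{g | p (f g)} = #{h ∈ univ.image f | p h} * #{g | f g = 0} := by
  rw [card_eq_sum_card_image f, ← filter_image]
  refine sum_const_nat fun h hh => ?_
  obtain ⟨hrange, hp⟩ := mem_filter.mp hh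
  obtain ⟨g, -, rfl⟩ := mem_image.mp hrange
  rw [filter_filter, ← card_fiber_eq_of_mem_range f ⟨g, rfl⟩ ⟨0, map_zero f⟩]
  congr 2 with g'
  grind

theorem card_filter_image_div_card_image (f : G →+ H) (p : H → Prop) [DecidablePred p] :
    (#{h ∈ univ.image f | p h} : ℝ) / #(univ.image f) = #{g | p (f g)} / Fintype.card G := by
  have hker : (#{g | f g = 0} : ℝ) ≠ 0 := by
    exact_mod_cast (card_pos.mpr ⟨0, by simp⟩).ne'
  have hG := card_filter_comp_eq_mul_card_ker f (fun _ => True)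
  simp only [filter_true] at hG
  rw [← card_univ, hG, card_filter_comp_eq_mul_card_ker f p]
  push_cast
  exact (mul_div_mul_right _ _ hker).symm

end AddMonoidHom

namespace LinearMap

theorem natCard_ker_eq_card_filter {R V W : Type*} [Semiring R] [AddCommMonoid V] [Module R V]
    [AddCommMonoid W] [Module R W] [Fintype V] [DecidableEq W] (f : V →ₗ[R] W) :
    Nat.card (ker f) = #{v | f v = 0} := by
  rw [← Fintype.card_subtype, ← Nat.card_eq_fintype_card]
  rfl

variable {K V W : Type*} [Field K] [AddCommGroup V] [Module K V] [Module.Finite K V]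
  [AddCommGroup W] [Module K W]

theorem natCard_ker_mul_pow_finrank_range (f : V →ₗ[K] W) :
    Nat.card (ker f) * Nat.card K ^ finrank K (range f) = Nat.card V := by
  rw [natCard_eq_pow_finrank (K := K) (V := ker f), natCard_eq_pow_finrank (K := K) (V := V),
    ← pow_add, add_comm, finrank_range_add_finrank_ker]

open Classical in
theorem natCard_mul_natCard_ker_of_functional (φ : V →ₗ[K] K) :
    Nat.card K * Nat.card (ker φ) = Nat.card V * if φ = 0 then Nat.card K else 1 := by
  by_cases hφ : φ = 0
  · subst hφ
    rw [if_pos rfl, ker_zero, Nat.card_congr Submodule.topEquiv.toEquiv, mul_comm]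
  · have hrange : range φ = ⊤ := range_eq_top.mpr (surjective_of_ne_zero hφ)
    rw [if_neg hφ, mul_one, ← natCard_ker_mul_pow_finrank_range φ, hrange, finrank_top,
      finrank_self, pow_one, mul_comm]

end LinearMap

namespace Matrix

theorem mulVec_dotProduct_mulVec {R m n o : Type*} [CommSemiring R] [Fintype m] [Fintype n]
    [Fintype o] (A : Matrix m n R) (B : Matrix m o R) (d : n → R) (e : o → R) :
    A *ᵥ d ⬝ᵥ B *ᵥ e = d ᵥ* (Aᵀ * B) ⬝ᵥ e := by
  rw [dotProduct_mulVec, ← vecMul_transpose, vecMul_vecMul]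

variable {K m n : Type*} [Field K] [Fintype K] [DecidableEq K] [Fintype m] [Fintype n] [DecidableEq n]

theorem card_mulVec_eq_zero_mul_pow_rank (A : Matrix m n K) :
    #{v | A *ᵥ v = 0} * Fintype.card K ^ A.rank = Fintype.card K ^ Fintype.card n := by
  have := A.mulVecLin.natCard_ker_mul_pow_finrank_range
  rwa [A.mulVecLin.natCard_ker_eq_card_filter, Nat.card_eq_fintype_card, Nat.card_fun,
    Nat.card_eq_fintype_card, Nat.card_eq_fintype_card] at this

theorem card_mul_card_dotProduct_eq_zero (w : n → K) :
    Fintype.card K * #{v | w ⬝ᵥ v = 0} =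
      Fintype.card K ^ Fintype.card n * if w = 0 then Fintype.card K else 1 := by
  have := (dotProductBilin K K w).natCard_mul_natCard_ker_of_functional
  have hzero : dotProductBilin K K w = 0 ↔ w = 0 := by
    rw [← dotProduct_eq_zero_iff, LinearMap.ext_iff]
    rfl
  rw [LinearMap.natCard_ker_eq_card_filter, Nat.card_fun, Nat.card_eq_fintype_card,
    Nat.card_eq_fintype_card] at this
  simpa only [hzero, dotProductBilin_apply_apply] using this

theorem card_mul_card_vecMul_dotProduct_eq_zero [DecidableEq m] (M : Matrix m n K) :
    Fintype.card K * #{p : (m → K) × (n → K) | p.1 ᵥ* M ⬝ᵥ p.2 = 0} =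
      Fintype.card K ^ Fintype.card n *
        ∑ d : m → K, if d ᵥ* M = 0 then Fintype.card K else 1 := by
  rw [card_filter, Fintype.sum_prod_type, mul_sum, mul_sum]
  refine sum_congr rfl fun d _ => ?_
  rw [← card_filter]
  exact card_mul_card_dotProduct_eq_zero (d ᵥ* M)

theorem card_vecMul_dotProduct_eq_zero_div_card [DecidableEq m] (M : Matrix m n K) :
    (#{p : (m → K) × (n → K) | p.1 ᵥ* M ⬝ᵥ p.2 = 0} : ℝ) / Fintype.card ((m → K) × (n → K)) =
      (1 + (Fintype.card K - 1) / (Fintype.card K : ℝ) ^ M.rank) / Fintype.card K := by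
  have hpairs := M.card_mul_card_vecMul_dotProduct_eq_zero
  have hker := Mᵀ.card_mulVec_eq_zero_mul_pow_rank
  simp only [mulVec_transpose, rank_transpose] at hker
  have hsplit := card_filter_add_card_filter_not (s := (univ : Finset (m → K)))
    (fun d => d ᵥ* M = 0)
  rw [sum_ite, sum_const, sum_const, smul_eq_mul, smul_eq_mul, mul_one] at hpairs
  rw [card_univ, Fintype.card_fun] at hsplit
  rw [Fintype.card_prod, Fintype.card_fun, Fintype.card_fun]
  rify at hpairs hker hsplit
  set q : ℝ := (Fintype.card K : ℝ)
  have hq : q ≠ 0 := by positivity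
  push_cast
  field_simp
  linear_combination q ^ M.rank * hpairs + q ^ Fintype.card n * q ^ M.rank * hsplit
    + (q - 1) * q ^ Fintype.card n * hker

end Matrix

theorem code_orthogonality_prob_eq_rank {ns n : ℕ}
    (Ps : Matrix (Fin ns) (Fin n) (ZMod 2))
    (Cs : Finset (Fin ns → ZMod 2))
    (hCs : Cs = Finset.image (fun d : Fin n → ZMod 2 => Matrix.mulVec Ps d) Finset.univ) :
    (((Cs ×ˢ Cs).filter (fun cc => dotProduct cc.1 cc.2 = 0)).card : ℝ) /
        ((Cs.card : ℝ)) ^ 2 =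
      (1 / 2) * (1 + ((2 : ℝ) ^ (Matrix.rank (Ps.transpose * Ps)))⁻¹) := by
  let f := Ps.mulVecLin.toAddMonoidHom.prodMap Ps.mulVecLin.toAddMonoidHom
  have himage : univ.image f = Cs ×ˢ Cs := by
    rw [hCs, ← prodMap_image_product, univ_product_univ]
    rfl
  rw [sq, ← Nat.cast_mul, ← card_product, ← himage, f.card_filter_image_div_card_image]
  simp only [f, AddMonoidHom.coe_prodMap, LinearMap.toAddMonoidHom_coe, mulVecLin_apply,
    Prod.map_fst, Prod.map_snd, mulVec_dotProduct_mulVec]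
  rw [card_vecMul_dotProduct_eq_zero_div_card, ZMod.card]
  norm_num
  ring
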